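/- arXiv:1402.2358 — 9 statements merged into one kernel-verified Lean document; each statement's English description precedes it below -/
import Mathlib

section
/- For every nonnegative integer n, the Cauchy number of the second kind satisfies c_n = n! ∫₀^∞ du / (u (π² + (ln u)²) (1+u)^n). -/
/-!
For `0 < x < 1` the substitution `u = t / (1 - t)` turns the beta integral into
`∫₀^∞ u^(x-1) / (1+u)^(n+1) du = Γ(x) Γ(n+1-x) / n!`, and the reflection formula turns
`sin(πx)/π · Γ(x) Γ(n+1-x)` into `(1-x)(2-x)⋯(n-x)`, whose integral over `(0,1)` is `c_n`.
On the other hand `∫₀¹ sin(πx) u^(x-1) dx = π(1+u) / (u(π² + log² u))`, an elementary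
integral of `exp(x log u) sin(πx)`. Integrating the nonnegative function
`sin(πx)/π · u^(x-1)/(1+u)^(n+1)` over `(0,1) × (0,∞)` in both orders gives the formula.
-/

open MeasureTheory Real Nat

noncomputable def cauchy2 (n : ℕ) : ℝ :=
  ∫ x in (0:ℝ)..1, ∏ i ∈ Finset.range n, (x + i)

open Set

section BetaIntegral

lemma ofReal_rpow_mul_one_sub_rpow {t : ℝ} (ht : t ∈ Icc (0 : ℝ) 1) (a b : ℝ) :
    ((t ^ (a - 1) * (1 - t) ^ (b - 1) : ℝ) : ℂ) =
      (t : ℂ) ^ ((a : ℂ) - 1) * (1 - (t : ℂ)) ^ ((b : ℂ) - 1) := by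
  rw [Complex.ofReal_mul, Complex.ofReal_cpow ht.1, Complex.ofReal_cpow (sub_nonneg.2 ht.2)]
  push_cast
  rfl

lemma hasDerivAt_div_one_sub {t : ℝ} (ht : t ≠ 1) :
    HasDerivAt (fun s : ℝ => s / (1 - s)) ((1 - t) ^ 2)⁻¹ t := by
  have h1t : 1 - t ≠ 0 := sub_ne_zero.2 ht.symm
  refine ((hasDerivAt_id' t).div ((hasDerivAt_const t 1).sub (hasDerivAt_id' t)) h1t).congr_deriv
    ?_
  simp only [Pi.sub_apply]
  field_simp
  ring

lemma injOn_div_one_sub : InjOn (fun t : ℝ => t / (1 - t)) {1}ᶜ := by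
  intro s hs t ht hst
  have hs1 : 1 - s ≠ 0 := sub_ne_zero.2 (Ne.symm hs)
  have ht1 : 1 - t ≠ 0 := sub_ne_zero.2 (Ne.symm ht)
  field_simp at hst
  linarith

lemma image_div_one_sub_Ioo : (fun t : ℝ => t / (1 - t)) '' Ioo 0 1 = Ioi 0 := by
  ext y
  constructor
  · rintro ⟨t, ⟨ht0, ht1⟩, rfl⟩
    exact div_pos ht0 (sub_pos.2 ht1)
  · intro (hy : 0 < y)
    refine ⟨y / (1 + y), ⟨by positivity, (div_lt_one (by positivity)).2 (by linarith)⟩, ?_⟩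
    field_simp
    ring

lemma abs_deriv_smul_rpow_div_one_add_rpow {t : ℝ} (ht : t ∈ Ioo (0 : ℝ) 1) (a b : ℝ) :
    |((1 - t) ^ 2)⁻¹| • ((t / (1 - t)) ^ (a - 1) / (1 + t / (1 - t)) ^ (a + b)) =
      t ^ (a - 1) * (1 - t) ^ (b - 1) := by
  have hc : 0 < 1 - t := sub_pos.2 ht.2
  have hsplit :
      (1 - t) ^ (a + b) = (1 - t) ^ (b - 1) * (1 - t) ^ (2 : ℝ) * (1 - t) ^ (a - 1) := by
    rw [← rpow_add hc, ← rpow_add hc]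
    ring_nf
  have hinv : 1 + t / (1 - t) = (1 - t)⁻¹ := by
    field_simp
    ring
  rw [hinv, div_rpow ht.1.le hc.le, inv_rpow hc.le, hsplit, rpow_two, smul_eq_mul,
    abs_of_pos (by positivity)]
  have := rpow_pos_of_pos hc (a - 1)
  field_simp

variable {a b : ℝ}

theorem intervalIntegrable_rpow_mul_one_sub_rpow (ha : 0 < a) (hb : 0 < b) :
    IntervalIntegrable (fun t : ℝ => t ^ (a - 1) * (1 - t) ^ (b - 1)) volume 0 1 := by
  have h := (Complex.betaIntegral_convergent (u := a) (v := b) (by simpa) (by simpa)).congr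
    (g := fun t : ℝ => ((t ^ (a - 1) * (1 - t) ^ (b - 1) : ℝ) : ℂ)) fun t ht =>
      (ofReal_rpow_mul_one_sub_rpow (Ioc_subset_Icc_self (by simpa using ht)) a b).symm
  rw [intervalIntegrable_iff_integrableOn_Ioc_of_le zero_le_one] at h ⊢
  have h_re := h.re
  simp only [RCLike.re_to_complex, Complex.ofReal_re] at h_re
  exact h_re

theorem integral_rpow_mul_one_sub_rpow (ha : 0 < a) (hb : 0 < b) :
    ∫ t in (0 : ℝ)..1, t ^ (a - 1) * (1 - t) ^ (b - 1) = Gamma a * Gamma b / Gamma (a + b) := by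
  apply Complex.ofReal_injective
  calc ((∫ t in (0 : ℝ)..1, t ^ (a - 1) * (1 - t) ^ (b - 1) : ℝ) : ℂ)
      = Complex.betaIntegral a b := by
        rw [← intervalIntegral.integral_ofReal]
        exact intervalIntegral.integral_congr fun t ht =>
          ofReal_rpow_mul_one_sub_rpow (by simpa using ht) a b
    _ = _ := by
        rw [Complex.betaIntegral_eq_Gamma_mul_div _ _ (by simpa) (by simpa), ← Complex.ofReal_add]
        simp only [Complex.Gamma_ofReal]
        push_cast
        rfl

theorem integrableOn_Ioi_rpow_div_one_add_rpow (ha : 0 < a) (hb : 0 < b) :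
    IntegrableOn (fun u : ℝ => u ^ (a - 1) / (1 + u) ^ (a + b)) (Ioi 0) := by
  rw [← image_div_one_sub_Ioo, integrableOn_image_iff_integrableOn_abs_deriv_smul
    measurableSet_Ioo (fun t ht => (hasDerivAt_div_one_sub ht.2.ne).hasDerivWithinAt)
    (injOn_div_one_sub.mono fun t ht => ht.2.ne)]
  refine (integrableOn_congr_fun (fun t ht => (abs_deriv_smul_rpow_div_one_add_rpow ht a b).symm)
    measurableSet_Ioo).1 ?_
  exact (intervalIntegrable_iff_integrableOn_Ioo_of_le zero_le_one).1
    (intervalIntegrable_rpow_mul_one_sub_rpow ha hb)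

theorem integral_Ioi_rpow_div_one_add_rpow (ha : 0 < a) (hb : 0 < b) :
    ∫ u in Ioi 0, u ^ (a - 1) / (1 + u) ^ (a + b) = Gamma a * Gamma b / Gamma (a + b) := by
  rw [← image_div_one_sub_Ioo, integral_image_eq_integral_abs_deriv_smul
    measurableSet_Ioo (fun t ht => (hasDerivAt_div_one_sub ht.2.ne).hasDerivWithinAt)
    (injOn_div_one_sub.mono fun t ht => ht.2.ne),
    setIntegral_congr_fun measurableSet_Ioo fun t ht => abs_deriv_smul_rpow_div_one_add_rpow ht a b,
    ← integral_rpow_mul_one_sub_rpow ha hb, intervalIntegral.integral_of_le zero_le_one,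
    integral_Ioc_eq_integral_Ioo]

end BetaIntegral

theorem integral_exp_mul_mul_sin_pi_mul (a : ℝ) :
    ∫ x in (0 : ℝ)..1, exp (a * x) * sin (π * x) = π * (exp a + 1) / (a ^ 2 + π ^ 2) := by
  have hden : a ^ 2 + π ^ 2 ≠ 0 := by positivity
  have hderiv : ∀ x : ℝ, HasDerivAt
      (fun y => exp (a * y) * (a * sin (π * y) - π * cos (π * y)) / (a ^ 2 + π ^ 2))
      (exp (a * x) * sin (π * x)) x := by
    intro x
    have hlin : ∀ c : ℝ, HasDerivAt (fun y => c * y) c x := fun c => by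
      simpa using (hasDerivAt_id x).const_mul c
    refine ((((hlin a).exp).mul
      (((hlin π).sin.const_mul a).sub ((hlin π).cos.const_mul π))).div_const _).congr_deriv ?_
    simp only [Pi.sub_apply]
    field_simp
    ring
  rw [intervalIntegral.integral_eq_sub_of_hasDerivAt (fun x _ => hderiv x)
    (by apply Continuous.intervalIntegrable; fun_prop)]
  simp only [mul_one, mul_zero, sin_pi, cos_pi, sin_zero, cos_zero, exp_zero]
  ring

theorem integral_sin_pi_mul_mul_rpow {u : ℝ} (hu : 0 < u) :
    ∫ x in (0 : ℝ)..1, sin (π * x) * u ^ (x - 1) =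
      π * (1 + u) / (u * (π ^ 2 + Real.log u ^ 2)) := by
  have hrpow :
      ∀ x : ℝ, sin (π * x) * u ^ (x - 1) = exp (Real.log u * x) * sin (π * x) / u := by
    intro x
    rw [rpow_def_of_pos hu, mul_sub, mul_one, exp_sub, exp_log hu]
    ring
  simp_rw [hrpow]
  rw [intervalIntegral.integral_div, integral_exp_mul_mul_sin_pi_mul, exp_log hu]
  field_simp
  ring

theorem Real.Gamma_add_nat_eq_prod_mul {s : ℝ} (hs : ∀ m : ℕ, s ≠ -m) (n : ℕ) :
    Gamma (s + n) = (∏ k ∈ Finset.range n, (s + k)) * Gamma s := by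
  induction n with
  | zero => simp
  | succ n ih =>
    have hsn : s + n ≠ 0 := fun h => hs n (by linarith)
    rw [Nat.cast_succ, ← add_assoc, Gamma_add_one hsn, ih, Finset.prod_range_succ]
    ring

theorem Real.sin_pi_mul_mul_Gamma_mul_Gamma_one_sub_add_nat {x : ℝ} (hx : sin (π * x) ≠ 0)
    (n : ℕ) :
    sin (π * x) * (Gamma x * Gamma (1 - x + n)) = π * ∏ k ∈ Finset.range n, (1 - x + k) := by
  have hs : ∀ m : ℕ, 1 - x ≠ -m := fun m h => hx <| by
    rw [show x = (m + 1 : ℕ) by push_cast; linarith, mul_comm]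
    exact sin_nat_mul_pi _
  calc sin (π * x) * (Gamma x * Gamma (1 - x + n))
      = sin (π * x) * (Gamma x * Gamma (1 - x)) * ∏ k ∈ Finset.range n, (1 - x + k) := by
        rw [Real.Gamma_add_nat_eq_prod_mul hs]
        ring
    _ = π * ∏ k ∈ Finset.range n, (1 - x + k) := by
        rw [Gamma_mul_Gamma_one_sub, mul_div_cancel₀ _ hx]

theorem integral_integral_swap_of_nonneg {α β : Type*} [MeasurableSpace α] [MeasurableSpace β]
    {μ : Measure α} {ν : Measure β} [SFinite μ] [SFinite ν] {f : α → β → ℝ}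
    (hf : AEStronglyMeasurable (Function.uncurry f) (μ.prod ν))
    (hf_nonneg : ∀ᵐ x ∂μ, ∀ᵐ y ∂ν, 0 ≤ f x y) (hf_int : ∀ᵐ x ∂μ, Integrable (f x) ν)
    (hf_int_int : Integrable (fun x => ∫ y, f x y ∂ν) μ) :
    ∫ x, ∫ y, f x y ∂ν ∂μ = ∫ y, ∫ x, f x y ∂μ ∂ν := by
  refine integral_integral_swap ((integrable_prod_iff hf).2 ⟨hf_int, hf_int_int.congr ?_⟩)
  filter_upwards [hf_nonneg] with x hx
  exact integral_congr_ae (hx.mono fun y hy => (Real.norm_of_nonneg hy).symm)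

lemma sin_pi_mul_pos {x : ℝ} (hx : x ∈ Ioo (0 : ℝ) 1) : 0 < sin (π * x) :=
  sin_pos_of_pos_of_lt_pi (by nlinarith [pi_pos, hx.1]) (by nlinarith [pi_pos, hx.2])

lemma rpow_add_one_sub_add_nat (y x : ℝ) (n : ℕ) : y ^ (x + (1 - x + n)) = y ^ (n + 1) := by
  rw [← rpow_natCast]
  push_cast
  ring_nf

section Kernel

noncomputable def cauchy2Kernel (n : ℕ) (x u : ℝ) : ℝ :=
  sin (π * x) / π * (u ^ (x - 1) / (1 + u) ^ (n + 1))

variable {n : ℕ}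

lemma cauchy2Kernel_nonneg {x u : ℝ} (hx : x ∈ Ioo (0 : ℝ) 1) (hu : 0 < u) :
    0 ≤ cauchy2Kernel n x u := by
  have := sin_pi_mul_pos hx
  unfold cauchy2Kernel
  positivity

lemma measurable_cauchy2Kernel : Measurable (Function.uncurry (cauchy2Kernel n)) := by
  unfold cauchy2Kernel Function.uncurry
  fun_prop

lemma integrableOn_Ioi_cauchy2Kernel {x : ℝ} (hx : x ∈ Ioo (0 : ℝ) 1) :
    IntegrableOn (cauchy2Kernel n x) (Ioi 0) := by
  have h := integrableOn_Ioi_rpow_div_one_add_rpow hx.1 (b := 1 - x + n)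
    (by linarith [hx.2, n.cast_nonneg (α := ℝ)])
  simp_rw [rpow_add_one_sub_add_nat] at h
  exact h.const_mul _

lemma integral_Ioi_cauchy2Kernel {x : ℝ} (hx : x ∈ Ioo (0 : ℝ) 1) :
    ∫ u in Ioi 0, cauchy2Kernel n x u = (∏ k ∈ Finset.range n, (1 - x + k)) / n ! := by
  have h := integral_Ioi_rpow_div_one_add_rpow hx.1 (b := 1 - x + n)
    (by linarith [hx.2, n.cast_nonneg (α := ℝ)])
  simp_rw [rpow_add_one_sub_add_nat] at h
  rw [show x + (1 - x + n) = n + 1 by ring, Gamma_nat_eq_factorial] at h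
  unfold cauchy2Kernel
  rw [integral_const_mul, h, _root_.div_mul_div_comm,
    sin_pi_mul_mul_Gamma_mul_Gamma_one_sub_add_nat (sin_pi_mul_pos hx).ne',
    mul_div_mul_left _ _ pi_ne_zero]

lemma integral_Ioo_cauchy2Kernel {u : ℝ} (hu : 0 < u) :
    ∫ x in Ioo (0 : ℝ) 1, cauchy2Kernel n x u =
      1 / (u * (π ^ 2 + Real.log u ^ 2) * (1 + u) ^ n) := by
  have hsplit :
      ∀ x, cauchy2Kernel n x u = sin (π * x) * u ^ (x - 1) / (π * (1 + u) ^ (n + 1)) :=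
    fun x => div_mul_div_comm _ _ _ _
  simp_rw [hsplit]
  rw [integral_div, ← integral_Ioc_eq_integral_Ioo,
    ← intervalIntegral.integral_of_le zero_le_one, integral_sin_pi_mul_mul_rpow hu]
  field_simp
  ring

lemma integrableOn_Ioo_integral_Ioi_cauchy2Kernel :
    IntegrableOn (fun x => ∫ u in Ioi 0, cauchy2Kernel n x u) (Ioo 0 1) := by
  refine (integrableOn_congr_fun (fun x hx => (integral_Ioi_cauchy2Kernel hx).symm)
    measurableSet_Ioo).1 ?_
  exact (Continuous.integrableOn_Icc (by fun_prop)).mono_set Ioo_subset_Icc_self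

end Kernel

lemma cauchy2_eq_integral_Ioo (n : ℕ) :
    cauchy2 n = ∫ x in Ioo (0 : ℝ) 1, ∏ k ∈ Finset.range n, (1 - x + k) := by
  rw [← integral_Ioc_eq_integral_Ioo, ← intervalIntegral.integral_of_le zero_le_one, cauchy2,
    intervalIntegral.integral_comp_sub_left (fun y => ∏ k ∈ Finset.range n, (y + k))]
  norm_num

theorem cauchy2_integral_repr (n : ℕ) :
    cauchy2 n =
      (n ! : ℝ) * ∫ u in Set.Ioi (0:ℝ),
        1 / (u * (π ^ 2 + (Real.log u) ^ 2) * (1 + u) ^ n) := by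
  have hswap := integral_integral_swap_of_nonneg (f := cauchy2Kernel n)
    (μ := volume.restrict (Ioo 0 1)) (ν := volume.restrict (Ioi 0))
    measurable_cauchy2Kernel.aestronglyMeasurable
    (by
      filter_upwards [ae_restrict_mem measurableSet_Ioo] with x hx
      filter_upwards [ae_restrict_mem measurableSet_Ioi] with u hu using cauchy2Kernel_nonneg hx hu)
    ((ae_restrict_mem measurableSet_Ioo).mono fun x hx => integrableOn_Ioi_cauchy2Kernel hx)
    integrableOn_Ioo_integral_Ioi_cauchy2Kernel
  rw [setIntegral_congr_fun measurableSet_Ioo fun x hx => integral_Ioi_cauchy2Kernel hx,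
    setIntegral_congr_fun measurableSet_Ioi fun u hu => integral_Ioo_cauchy2Kernel hu,
    integral_div, ← cauchy2_eq_integral_Ioo] at hswap
  rw [← hswap, mul_div_cancel₀ _ (by positivity)]
end

section
/- The sequence {c_n / n!}_{n≥0} is completely monotonic: for all nonnegative integers n and k, (−1)^k Δ^k (c_n/n!) ≥ 0, where Δ^k μ_n = Σ_{m=0}^k (−1)^m (k choose m) μ_{n+k−m}. -/
open MeasureTheory Real Nat

/-!
Writing `(x)ₙ = x (x + 1) ⋯ (x + n - 1)`, we have `cₙ / n! = ∫₀¹ (x)ₙ / n! dx`, and forward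
differences in `n` commute with the integral. For fixed `x` the sequence `(x)ₙ / n!` has
`-Δ ((x)ₙ / n!) = (x)ₙ (1 - x) / (n + 1)!`, so iterating gives
`(-1)ᵏ Δᵏ ((x)ₙ / n!) = (x)ₙ (1 - x)ₖ / (n + k)!`, which is nonnegative for `0 ≤ x ≤ 1`.
-/

open Finset
open scoped fwdDiff

theorem fwdDiff_iter_eq_alternating_sum {R : Type*} [CommRing R] (μ : ℕ → R) (n k : ℕ) :
    Δ_[1] ^[k] μ n = ∑ m ∈ range (k + 1), (-1 : R) ^ m * k.choose m * μ (n + k - m) := by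
  rw [fwdDiff_iter_eq_sum_shift, ← sum_range_reflect]
  refine sum_congr rfl fun j hj => ?_
  have hjk : j ≤ k := Nat.lt_succ_iff.mp (mem_range.mp hj)
  rw [add_tsub_cancel_right, Nat.sub_sub_self hjk, Nat.choose_symm hjk, zsmul_eq_mul, smul_eq_mul,
    mul_one, Nat.add_sub_assoc hjk]
  push_cast
  rfl

theorem fwdDiff_iter_intervalIntegral {M E : Type*} [AddCommMonoid M] [NormedAddCommGroup E]
    [NormedSpace ℝ E] (h : M) {F : M → ℝ → E} {a b : ℝ}
    (hF : ∀ m, IntervalIntegrable (F m) volume a b) (k : ℕ) (n : M) :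
    Δ_[h] ^[k] (fun m => ∫ x in a..b, F m x) n = ∫ x in a..b, Δ_[h] ^[k] (fun m => F m x) n := by
  induction k generalizing F with
  | zero => rfl
  | succ k ih =>
    have hΔ : Δ_[h] (fun m => ∫ x in a..b, F m x) = fun m => ∫ x in a..b, (F (m + h) x - F m x) :=
      funext fun m => (intervalIntegral.integral_sub (hF _) (hF m)).symm
    simp only [Function.iterate_succ_apply, hΔ]
    exact ih fun m => (hF _).sub (hF m)

theorem neg_one_pow_mul_fwdDiff_iter_pochhammer_div_factorial {K : Type*} [Field K] [CharZero K]
    (x : K) (k n : ℕ) :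
    (-1) ^ k * Δ_[1] ^[k] (fun m => (∏ i ∈ range m, (x + i)) / m !) n =
      (∏ i ∈ range n, (x + i)) * (∏ j ∈ range k, ((j : K) + 1 - x)) / (n + k)! := by
  induction k generalizing n with
  | zero => simp
  | succ k ih =>
    have hstep : (-1 : K) ^ (k + 1) * Δ_[1] ^[k + 1] (fun m => (∏ i ∈ range m, (x + i)) / m !) n =
        (-1) ^ k * Δ_[1] ^[k] (fun m => (∏ i ∈ range m, (x + i)) / m !) n -
          (-1) ^ k * Δ_[1] ^[k] (fun m => (∏ i ∈ range m, (x + i)) / m !) (n + 1) := by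
      rw [Function.iterate_succ_apply', fwdDiff]; ring
    rw [hstep, ih, ih, prod_range_succ, prod_range_succ, show n + 1 + k = n + k + 1 by omega,
      show n + (k + 1) = n + k + 1 by omega, factorial_succ]
    have hfac : ((n + k)! : K) ≠ 0 := Nat.cast_ne_zero.mpr (factorial_ne_zero _)
    have hsucc : (n : K) + k + 1 ≠ 0 := by exact_mod_cast succ_ne_zero (n + k)
    push_cast
    field_simp
    ring

theorem cauchy2_completely_monotonic_sequence (n k : ℕ) :
    0 ≤ (-1 : ℝ) ^ k *
      ∑ m ∈ Finset.range (k + 1),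
        (-1 : ℝ) ^ m * (k.choose m) * (cauchy2 (n + k - m) / (n + k - m)!) := by
  have hμ :
      (fun m => cauchy2 m / m !) = fun m => ∫ x in (0 : ℝ)..1, (∏ i ∈ range m, (x + i)) / m ! :=
    funext fun m => (intervalIntegral.integral_div _ _).symm
  have hint (m : ℕ) :
      IntervalIntegrable (fun x : ℝ => (∏ i ∈ range m, (x + i)) / m !) volume 0 1 :=
    Continuous.intervalIntegrable (by fun_prop) 0 1
  rw [← fwdDiff_iter_eq_alternating_sum (fun m => cauchy2 m / m !), hμ,
    fwdDiff_iter_intervalIntegral 1 hint, ← intervalIntegral.integral_const_mul]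
  refine intervalIntegral.integral_nonneg zero_le_one fun x ⟨hx₀, hx₁⟩ => ?_
  rw [neg_one_pow_mul_fwdDiff_iter_pochhammer_div_factorial]
  have hrising : 0 ≤ ∏ i ∈ range n, (x + i) := prod_nonneg fun i _ => by positivity
  have hrising_one_sub : 0 ≤ ∏ j ∈ range k, ((j : ℝ) + 1 - x) :=
    prod_nonneg fun j _ => by linarith [(j.cast_nonneg : (0 : ℝ) ≤ j)]
  positivity
end

section
/- There exists a non-decreasing bounded function α on [0,1], continuous at 0, such that c_n/n! = ∫₀¹ t^n dα(t) for all nonnegative integers n. Equivalently, there is a finite Borel measure μ on [0,1] with μ({0}) = 0 such that c_n/n! = ∫₀¹ t^n dμ(t) for all n ≥ 0. -/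
open MeasureTheory Real Nat

/-!
Since `B(x + n, 1 - x) / B(x, 1 - x) = x (x + 1) ⋯ (x + n - 1) / n!`, the integrand of `c_n / n!`
at `x ∈ (0, 1)` is the `n`-th moment of the Beta(x, 1 - x) distribution. Averaging over `x`,
`c_n / n!` is the `n`-th moment of the uniform mixture of these Beta laws: a probability measure
on `[0, 1]` with a density, hence without atom at `0`.
-/

open ProbabilityTheory Set
open scoped ENNReal

lemma Real.Gamma_add_nat {x : ℝ} (hx : ∀ k : ℕ, x ≠ -k) (n : ℕ) :
    Gamma (x + n) = (∏ i ∈ Finset.range n, (x + i)) * Gamma x := by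
  induction n with
  | zero => simp
  | succ n ih =>
    have hxn : x + n ≠ 0 := fun h => hx n (eq_neg_of_add_eq_zero_left h)
    rw [Nat.cast_succ, ← add_assoc, Gamma_add_one hxn, ih, Finset.prod_range_succ]
    ring

namespace ProbabilityTheory

lemma beta_add_nat_div_beta {a b : ℝ} (ha : 0 < a) (hb : 0 < b) (n : ℕ) :
    beta (a + n) b / beta a b
      = (∏ i ∈ Finset.range n, (a + i)) / ∏ i ∈ Finset.range n, (a + b + i) := by
  have hab : a + n + b = a + b + n := by ring
  have hne : ∀ x : ℝ, 0 < x → ∀ k : ℕ, x ≠ -k := fun x hx k =>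
    ((neg_nonpos.2 k.cast_nonneg).trans_lt hx).ne'
  simp only [beta, hab, Gamma_add_nat (hne a ha), Gamma_add_nat (hne _ (add_pos ha hb))]
  have := Gamma_pos_of_pos ha
  have := Gamma_pos_of_pos hb
  have := Gamma_pos_of_pos (add_pos ha hb)
  have : 0 < ∏ i ∈ Finset.range n, (a + b + i) := Finset.prod_pos fun i _ => by positivity
  field_simp

lemma measurable_betaPDF (a b : ℝ) : Measurable (betaPDF a b) :=
  (measurable_betaPDFReal a b).ennreal_ofReal

lemma ofReal_pow_mul_betaPDF {a b : ℝ} (ha : 0 < a) (hb : 0 < b) (n : ℕ) (t : ℝ) :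
    ENNReal.ofReal (t ^ n) * betaPDF a b t
      = ENNReal.ofReal (beta (a + n) b / beta a b) * betaPDF (a + n) b t := by
  by_cases ht : 0 < t ∧ t < 1
  · rw [betaPDF_of_pos_lt_one ht.1 ht.2, betaPDF_of_pos_lt_one ht.1 ht.2,
      ← ENNReal.ofReal_mul (pow_nonneg ht.1.le n),
      ← ENNReal.ofReal_mul (div_nonneg (beta_pos (by positivity) hb).le (beta_pos ha hb).le)]
    congr 1
    have := beta_pos ha hb
    have := beta_pos (add_pos_of_pos_of_nonneg ha n.cast_nonneg) hb
    rw [add_sub_right_comm, rpow_add ht.1, rpow_natCast]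
    field_simp
  · simp [betaPDF_eq, ht]

lemma lintegral_ofReal_pow_betaMeasure {a b : ℝ} (ha : 0 < a) (hb : 0 < b) (n : ℕ) :
    ∫⁻ t, ENNReal.ofReal (t ^ n) ∂betaMeasure a b
      = ENNReal.ofReal (beta (a + n) b / beta a b) := by
  rw [betaMeasure, lintegral_withDensity_eq_lintegral_mul _ (measurable_betaPDF a b) (by fun_prop)]
  simp_rw [Pi.mul_apply, mul_comm (betaPDF a b _), ofReal_pow_mul_betaPDF ha hb n]
  rw [lintegral_const_mul _ (measurable_betaPDF _ b),
    lintegral_betaPDF_eq_one (add_pos_of_pos_of_nonneg ha n.cast_nonneg) hb, mul_one]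

lemma lintegral_ofReal_pow_betaMeasure_one_sub {x : ℝ} (hx : x ∈ Ioo 0 1) (n : ℕ) :
    ∫⁻ t, ENNReal.ofReal (t ^ n) ∂betaMeasure x (1 - x)
      = ENNReal.ofReal ((∏ i ∈ Finset.range n, (x + i)) / n !) := by
  have hfact : ∏ i ∈ Finset.range n, (x + (1 - x) + i) = (n ! : ℝ) := by
    rw [← Finset.prod_range_add_one_eq_factorial]
    push_cast
    exact Finset.prod_congr rfl fun i _ => by ring
  rw [lintegral_ofReal_pow_betaMeasure hx.1 (sub_pos.2 hx.2),
    beta_add_nat_div_beta hx.1 (sub_pos.2 hx.2), hfact]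

lemma beta_one_sub (x : ℝ) : beta x (1 - x) = π / sin (π * x) := by
  rw [beta, add_sub_cancel, Gamma_one, div_one, Gamma_mul_Gamma_one_sub]

lemma measurable_betaPDF_one_sub : Measurable fun p : ℝ × ℝ => betaPDF p.1 (1 - p.1) p.2 := by
  -- `Gamma` is not known to be measurable; the reflection formula removes it from the constant.
  simp only [betaPDF, betaPDFReal, beta_one_sub]
  refine Measurable.ennreal_ofReal (Measurable.ite ?_ (by fun_prop) measurable_const)
  exact measurableSet_Ioo.preimage measurable_snd

lemma measurable_betaMeasure_one_sub : Measurable fun x : ℝ => betaMeasure x (1 - x) :=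
  Measure.measurable_of_measurable_coe _ fun s hs => by
    simp only [betaMeasure, withDensity_apply _ hs]
    exact measurable_betaPDF_one_sub.lintegral_prod_right'

lemma betaMeasure_Icc_compl (a b : ℝ) : betaMeasure a b (Icc 0 1)ᶜ = 0 := by
  rw [betaMeasure, withDensity_apply _ measurableSet_Icc.compl]
  refine setLIntegral_eq_zero measurableSet_Icc.compl fun t ht => ?_
  have ht' : ¬(0 < t ∧ t < 1) := fun h => ht (Ioo_subset_Icc_self h)
  simp [betaPDF_eq, ht']

end ProbabilityTheory

noncomputable def cauchy2Measure : Measure ℝ :=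
  (volume.restrict (Ioo 0 1)).bind fun x => betaMeasure x (1 - x)

instance : IsProbabilityMeasure (volume.restrict (Ioo (0:ℝ) 1)) :=
  ⟨by simp⟩

instance : IsProbabilityMeasure cauchy2Measure :=
  isProbabilityMeasure_bind measurable_betaMeasure_one_sub.aemeasurable <|
    ae_restrict_of_forall_mem measurableSet_Ioo fun _ hx =>
      isProbabilityMeasureBeta hx.1 (sub_pos.2 hx.2)

lemma cauchy2Measure_apply_eq_zero {s : Set ℝ} (hs : MeasurableSet s)
    (h : ∀ x ∈ Ioo (0:ℝ) 1, betaMeasure x (1 - x) s = 0) : cauchy2Measure s = 0 := by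
  rw [cauchy2Measure, Measure.bind_apply hs measurable_betaMeasure_one_sub.aemeasurable]
  exact setLIntegral_eq_zero measurableSet_Ioo h

lemma cauchy2Measure_singleton_zero : cauchy2Measure {0} = 0 :=
  cauchy2Measure_apply_eq_zero (measurableSet_singleton 0) fun _ _ =>
    withDensity_absolutelyContinuous _ _ Real.volume_singleton

lemma cauchy2Measure_Icc_compl : cauchy2Measure (Icc 0 1)ᶜ = 0 :=
  cauchy2Measure_apply_eq_zero measurableSet_Icc.compl fun _ _ => betaMeasure_Icc_compl _ _

lemma cauchy2_nonneg (n : ℕ) : 0 ≤ cauchy2 n :=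
  intervalIntegral.integral_nonneg zero_le_one fun _ hx =>
    Finset.prod_nonneg fun i _ => add_nonneg hx.1 i.cast_nonneg

lemma cauchy2_div_factorial_eq_setIntegral (n : ℕ) :
    cauchy2 n / n ! = ∫ x in Ioo (0:ℝ) 1, (∏ i ∈ Finset.range n, (x + i)) / (n ! : ℝ) := by
  rw [cauchy2, ← intervalIntegral.integral_div, intervalIntegral.integral_of_le zero_le_one,
    integral_Ioc_eq_integral_Ioo]

lemma lintegral_ofReal_pow_cauchy2Measure (n : ℕ) :
    ∫⁻ t, ENNReal.ofReal (t ^ n) ∂cauchy2Measure = ENNReal.ofReal (cauchy2 n / n !) := by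
  rw [cauchy2Measure,
    Measure.lintegral_bind measurable_betaMeasure_one_sub.aemeasurable (by fun_prop),
    setLIntegral_congr_fun measurableSet_Ioo
      fun x hx => lintegral_ofReal_pow_betaMeasure_one_sub hx n,
    cauchy2_div_factorial_eq_setIntegral, ofReal_integral_eq_lintegral_ofReal]
  · exact (Continuous.integrableOn_Icc (by fun_prop)).mono_set Ioo_subset_Icc_self
  · exact ae_restrict_of_forall_mem measurableSet_Ioo fun x hx =>
      div_nonneg (Finset.prod_nonneg fun i _ => add_nonneg hx.1.le i.cast_nonneg) (by positivity)

theorem cauchy2_moment_sequence :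
    ∃ μ : Measure ℝ, IsFiniteMeasure μ ∧ μ {0} = 0 ∧ μ (Set.Icc (0:ℝ) 1)ᶜ = 0 ∧
      ∀ n : ℕ, cauchy2 n / (n ! : ℝ) = ∫ t, t ^ n ∂μ := by
  refine ⟨cauchy2Measure, inferInstance, cauchy2Measure_singleton_zero,
    cauchy2Measure_Icc_compl, fun n => ?_⟩
  have hnonneg : 0 ≤ᵐ[cauchy2Measure] fun t => t ^ n :=
    (ae_iff.2 cauchy2Measure_Icc_compl).mono fun t ht => pow_nonneg ht.1 n
  rw [integral_eq_lintegral_of_nonneg_ae hnonneg (by fun_prop),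
    lintegral_ofReal_pow_cauchy2Measure,
    ENNReal.toReal_ofReal (div_nonneg (cauchy2_nonneg n) (by positivity))]
end

section
/- The function x ↦ ∫₀^∞ du / (u ((ln u)² + π²) (u+1)^x) is completely monotonic on [0,∞): it is nonnegative and (−1)^k times its k-th derivative is nonnegative for every k ≥ 0. -/
open MeasureTheory Real Nat

noncomputable def f (x : ℝ) : ℝ :=
  ∫ u in Set.Ioi (0:ℝ), 1 / (u * ((Real.log u) ^ 2 + π ^ 2) * (u + 1) ^ x)

/-! Since `(u + 1) ^ x = exp (x log (u + 1))`, `f` is the Laplace-type integral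
`∫ w e^{-xL}` of the weight `w u = 1 / (u (log² u + π²))` against the nonnegative phase
`L u = log (u + 1)`, and `w` is integrable because `u = e^v` turns it into `1 / (v² + π²)`.
Differentiating under the integral sign, dominated via `t^k e^{-xt} ≤ k! / x^k`, gives
`(-1)^k f⁽ᵏ⁾ x = ∫ L^k w e^{-xL} ≥ 0` for `x > 0`.

`iteratedDeriv` is two-sided, so at `x = 0` the orders `k ≥ 1` see `f` on `(-∞, 0)`. There the
substituted integrand exceeds `x² / 4` on `(π, ∞)`, so the integral takes the junk value `0`, and
a function vanishing on `(-∞, 0)` has all derivatives of order `≥ 1` equal to `0` at `0`. -/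

open Set Filter Topology

theorem pow_mul_exp_neg_mul_le {t x : ℝ} (ht : 0 ≤ t) (hx : 0 < x) (k : ℕ) :
    t ^ k * exp (-(x * t)) ≤ k ! / x ^ k := by
  have h := Real.pow_div_factorial_le_exp _ (mul_nonneg hx.le ht) k
  rw [mul_pow, div_le_iff₀ (by positivity)] at h
  rw [le_div_iff₀ (by positivity), exp_neg]
  calc t ^ k * (exp (x * t))⁻¹ * x ^ k = x ^ k * t ^ k * (exp (x * t))⁻¹ := by ring
    _ ≤ exp (x * t) * k ! * (exp (x * t))⁻¹ := by gcongr
    _ = k ! := by field_simp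

section LaplaceMoment

variable {α : Type*} [MeasurableSpace α] {μ : Measure α} {w L : α → ℝ}

noncomputable def laplaceMoment (μ : Measure α) (w L : α → ℝ) (k : ℕ) (x : ℝ) : ℝ :=
  ∫ a, L a ^ k * w a * exp (-(x * L a)) ∂μ

theorem integrable_pow_mul_mul_exp_neg_mul (hw : Integrable w μ) (hL : AEStronglyMeasurable L μ)
    (hL0 : 0 ≤ᵐ[μ] L) (k : ℕ) {x : ℝ} (hx : 0 < x) :
    Integrable (fun a => L a ^ k * w a * exp (-(x * L a))) μ := by
  refine (hw.norm.const_mul (k ! / x ^ k)).mono' ?_ ?_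
  · exact ((hL.pow k).mul hw.aestronglyMeasurable).mul
      (continuous_exp.comp_aestronglyMeasurable (hL.const_mul x).neg)
  · filter_upwards [hL0] with a ha
    rw [norm_mul, norm_mul, norm_of_nonneg (pow_nonneg ha k), norm_of_nonneg (exp_pos _).le]
    calc L a ^ k * ‖w a‖ * exp (-(x * L a)) = (L a ^ k * exp (-(x * L a))) * ‖w a‖ := by
          ring
      _ ≤ k ! / x ^ k * ‖w a‖ := by gcongr; exact pow_mul_exp_neg_mul_le ha hx k

theorem hasDerivAt_laplaceMoment (hw : Integrable w μ) (hL : AEStronglyMeasurable L μ)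
    (hL0 : 0 ≤ᵐ[μ] L) (k : ℕ) {x : ℝ} (hx : 0 < x) :
    HasDerivAt (laplaceMoment μ w L k) (-laplaceMoment μ w L (k + 1) x) x := by
  have hint := integrable_pow_mul_mul_exp_neg_mul hw hL hL0
  have hderiv := hasDerivAt_integral_of_dominated_loc_of_deriv_le (μ := μ)
    (F := fun y a => L a ^ k * w a * exp (-(y * L a)))
    (F' := fun y a => -(L a ^ (k + 1) * w a * exp (-(y * L a))))
    (bound := fun a => L a ^ (k + 1) * |w a| * exp (-(x / 2 * L a)))
    (Metric.ball_mem_nhds x (half_pos hx))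
    (Eventually.of_forall fun y => ?_) (hint k hx) (hint (k + 1) hx).aestronglyMeasurable.neg
    ?_ ?_ ?_
  · exact hderiv.2.congr_deriv (integral_neg _)
  · exact ((hL.pow k).mul hw.aestronglyMeasurable).mul
      (continuous_exp.comp_aestronglyMeasurable (hL.const_mul y).neg)
  · filter_upwards [hL0] with a (ha : 0 ≤ L a) y hy
    have hxy : x / 2 ≤ y := by
      rw [Metric.mem_ball, Real.dist_eq, abs_sub_lt_iff] at hy; linarith
    rw [norm_neg, norm_mul, norm_mul, norm_of_nonneg (pow_nonneg ha _),
      norm_of_nonneg (exp_pos _).le, Real.norm_eq_abs]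
    gcongr
  · exact integrable_pow_mul_mul_exp_neg_mul hw.abs hL hL0 (k + 1) (half_pos hx)
  · refine Eventually.of_forall fun a y _ => ?_
    refine (((hasDerivAt_id y).mul_const (L a)).neg.exp.const_mul (L a ^ k * w a)).congr_deriv
      ?_
    simp only [id, pow_succ, Pi.neg_apply]
    ring

theorem iteratedDeriv_laplaceMoment_eqOn (hw : Integrable w μ) (hL : AEStronglyMeasurable L μ)
    (hL0 : 0 ≤ᵐ[μ] L) (k : ℕ) :
    EqOn (iteratedDeriv k (laplaceMoment μ w L 0)) (fun x => (-1) ^ k * laplaceMoment μ w L k x)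
      (Ioi 0) := by
  induction k with
  | zero => intro x _; simp
  | succ k ih =>
    intro x hx
    rw [iteratedDeriv_succ, (ih.eventuallyEq_of_mem (Ioi_mem_nhds hx)).deriv_eq,
      ((hasDerivAt_laplaceMoment hw hL hL0 k hx).const_mul _).deriv]
    ring

theorem laplaceMoment_nonneg (hw : 0 ≤ᵐ[μ] w) (hL0 : 0 ≤ᵐ[μ] L) (k : ℕ) (x : ℝ) :
    0 ≤ laplaceMoment μ w L k x :=
  integral_nonneg_of_ae <| by
    filter_upwards [hw, hL0] with a (hwa : 0 ≤ w a) (hLa : 0 ≤ L a)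
    positivity

theorem neg_one_pow_mul_iteratedDeriv_laplaceMoment_nonneg (hw : Integrable w μ)
    (hw0 : 0 ≤ᵐ[μ] w) (hL : AEStronglyMeasurable L μ) (hL0 : 0 ≤ᵐ[μ] L) (k : ℕ) {x : ℝ}
    (hx : 0 < x) : 0 ≤ (-1) ^ k * iteratedDeriv k (laplaceMoment μ w L 0) x := by
  rw [iteratedDeriv_laplaceMoment_eqOn hw hL hL0 k hx, ← mul_assoc, ← mul_pow]
  simpa using laplaceMoment_nonneg hw0 hL0 k x

end LaplaceMoment

theorem deriv_eq_zero_of_eqOn_Iio {g : ℝ → ℝ} {a : ℝ} (h : EqOn g 0 (Iio a)) :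
    deriv g a = 0 := by
  by_cases hg : DifferentiableAt ℝ g a
  · have hleft : g =ᶠ[𝓝[<] a] 0 := eventually_nhdsWithin_of_forall h
    have hga : g a = 0 := tendsto_nhds_unique (hg.continuousAt.tendsto.mono_left nhdsWithin_le_nhds)
      (tendsto_const_nhds.congr' hleft.symm)
    exact (uniqueDiffWithinAt_Iio a).eq_deriv _ hg.hasDerivAt.hasDerivWithinAt
      ((hasDerivWithinAt_const a _ 0).congr_of_eventuallyEq hleft hga)
  · exact deriv_zero_of_not_differentiableAt hg

theorem iteratedDeriv_succ_eq_zero_of_eqOn_Iio {g : ℝ → ℝ} {a : ℝ} (h : EqOn g 0 (Iio a))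
    (k : ℕ) : iteratedDeriv (k + 1) g a = 0 := by
  rw [iteratedDeriv_succ]
  refine deriv_eq_zero_of_eqOn_Iio fun x hx => ?_
  simpa using h.iteratedDeriv_of_isOpen isOpen_Iio k hx

theorem integrableOn_Ioi_zero_iff_integrable_exp_mul_comp_exp (g : ℝ → ℝ) :
    IntegrableOn g (Ioi 0) ↔ Integrable (fun v => exp v * g (exp v)) := by
  rw [← range_exp, ← image_univ, integrableOn_image_iff_integrableOn_abs_deriv_smul
    MeasurableSet.univ (fun v _ => (hasDerivAt_exp v).hasDerivWithinAt) exp_injective.injOn g,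
    integrableOn_univ]
  simp only [abs_of_pos (exp_pos _), smul_eq_mul]

theorem integrableOn_inv_mul_log_sq_add_pi_sq :
    IntegrableOn (fun u => (u * (Real.log u ^ 2 + π ^ 2))⁻¹) (Ioi 0) := by
  rw [integrableOn_Ioi_zero_iff_integrable_exp_mul_comp_exp]
  refine integrable_inv_one_add_sq.mono' (by fun_prop) (Eventually.of_forall fun v => ?_)
  have hpi : 1 ≤ π ^ 2 := by nlinarith [pi_gt_three]
  rw [log_exp, mul_inv, ← mul_assoc, mul_inv_cancel₀ (exp_pos v).ne', one_mul,
    norm_of_nonneg (by positivity), add_comm]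
  gcongr

theorem f_eq_laplaceMoment :
    f = laplaceMoment (volume.restrict (Ioi 0)) (fun u => (u * (Real.log u ^ 2 + π ^ 2))⁻¹)
      (fun u => Real.log (u + 1)) 0 := by
  ext x
  refine setIntegral_congr_fun measurableSet_Ioi fun u (hu : 0 < u) => ?_
  rw [rpow_def_of_pos (by linarith), pow_zero, one_mul, one_div, mul_inv, exp_neg, mul_comm x]

theorem f_eq_zero_of_neg {x : ℝ} (hx : x < 0) : f x = 0 := by
  refine integral_undef fun hint => ?_
  replace hint := (integrableOn_Ioi_zero_iff_integrable_exp_mul_comp_exp _).1 hint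
  have hc : 0 < x ^ 2 / 4 := by have := hx.ne; positivity
  have hbound : ∀ v, π < v →
      x ^ 2 / 4 ≤ exp v * (1 / (exp v * (Real.log (exp v) ^ 2 + π ^ 2) * (exp v + 1) ^ x)) := by
    intro v hv
    have hv0 : 0 < v := pi_pos.trans hv
    have hgrowth : (-x * v) ^ 2 / 2 ≤ (exp v + 1) ^ (-x) :=
      calc (-x * v) ^ 2 / 2 ≤ exp (-x * v) := by
            simpa only [Nat.factorial_two, Nat.cast_ofNat] using
              Real.pow_div_factorial_le_exp (-x * v) (by nlinarith) 2
        _ = exp v ^ (-x) := by rw [mul_comm, exp_mul]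
        _ ≤ (exp v + 1) ^ (-x) := rpow_le_rpow (exp_pos v).le (by linarith) (by linarith)
    rw [log_exp, one_div, mul_inv, mul_inv, ← mul_assoc, ← mul_assoc,
      mul_inv_cancel₀ (exp_pos v).ne', one_mul, ← rpow_neg (by positivity), inv_mul_eq_div,
      le_div_iff₀ (by positivity)]
    have hpi : π ^ 2 ≤ v ^ 2 := by nlinarith [pi_pos]
    nlinarith [mul_le_mul_of_nonneg_left hpi (sq_nonneg x)]
  have : IntegrableOn (fun _ => x ^ 2 / 4) (Ioi π) := by
    refine hint.integrableOn.mono' aestronglyMeasurable_const ?_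
    filter_upwards [ae_restrict_mem measurableSet_Ioi] with v hv
    rw [norm_of_nonneg hc.le]
    exact hbound v hv
  simp [integrableOn_const_iff, hc.ne'] at this

theorem f_completely_monotonic :
    (∀ x : ℝ, 0 ≤ x → 0 ≤ f x) ∧
    ∀ k : ℕ, ∀ x : ℝ, 0 ≤ x → 0 ≤ (-1 : ℝ) ^ k * iteratedDeriv k f x := by
  have hw0 : 0 ≤ᵐ[volume.restrict (Ioi 0)] fun u => (u * (Real.log u ^ 2 + π ^ 2))⁻¹ :=
    ae_restrict_of_forall_mem measurableSet_Ioi fun u (hu : 0 < u) => by positivity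
  have hL0 : 0 ≤ᵐ[volume.restrict (Ioi 0)] fun u => Real.log (u + 1) :=
    ae_restrict_of_forall_mem measurableSet_Ioi fun u (hu : 0 < u) => log_nonneg (by linarith)
  have hf0 (x : ℝ) : 0 ≤ f x := f_eq_laplaceMoment ▸ laplaceMoment_nonneg hw0 hL0 0 x
  refine ⟨fun x _ => hf0 x, fun k x hx => ?_⟩
  rcases hx.eq_or_lt with rfl | hx
  · cases k with
    | zero => simpa using hf0 0
    | succ k =>
      rw [iteratedDeriv_succ_eq_zero_of_eqOn_Iio (fun x hx => f_eq_zero_of_neg hx) k, mul_zero]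
  · rw [f_eq_laplaceMoment]
    exact neg_one_pow_mul_iteratedDeriv_laplaceMoment_nonneg
      integrableOn_inv_mul_log_sq_add_pi_sq hw0 (by fun_prop : Measurable _).aestronglyMeasurable
      hL0 k hx
end

section
/- Let m ≥ 1 and let λ = (λ_1,…,λ_m) and μ = (μ_1,…,μ_m) be m-tuples of nonnegative integers such that λ is majorized by μ. Then ∏_{i=1}^m c_{λ_i} ≤ ∏_{i=1}^m c_{μ_i}. -/
open MeasureTheory Real Nat

/-- `a` is majorized by `b`: every partial sum of `a` (i.e. the sum over any subset)
is dominated by the sum of `b` over some subset of the same cardinality, and the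
total sums coincide.  This is equivalent to the classical definition via
descending rearrangements. -/
def Majorizes {m : ℕ} (b a : Fin m → ℕ) : Prop :=
  (∀ s : Finset (Fin m), ∃ t : Finset (Fin m), t.card = s.card ∧
      ∑ i ∈ s, a i ≤ ∑ i ∈ t, b i) ∧
  ∑ i, a i = ∑ i, b i

/-!
The sequence `c_n` is log-convex: for every real `t`, `c_n t² - 2 c_{n+1} t + c_{n+2}` is the
integral over `[0, 1]` of `x(x+1)⋯(x+n-1) · ((t - x - n)² + x + n) ≥ 0`, so its discriminant
is nonpositive. The claim is then Karamata's inequality for the discrete convex function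
`n ↦ log c_n`. On `[0, N]` such a function is an affine function plus a nonnegative
combination of the hinges `n ↦ (n - k)₊` (truncated subtraction on `ℕ`). The affine part only
sees the equal totals, and against each hinge `Σ (λ_i - k)₊ ≤ Σ (μ_i - k)₊`, by applying the
majorization to the set `{i | k ≤ λ_i}`.
-/

open Finset

theorem Majorizes.sum_tsub_le {m : ℕ} {a b : Fin m → ℕ} (h : Majorizes b a) (k : ℕ) :
    ∑ i, (a i - k) ≤ ∑ i, (b i - k) := by
  set s := univ.filter fun i => k ≤ a i
  obtain ⟨t, hts, hst⟩ := h.1 s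
  have ha : ∑ i, (a i - k) + #s * k = ∑ i ∈ s, a i := by
    rw [← sum_filter_of_ne fun i _ hi => (Nat.sub_ne_zero_iff_lt.mp hi).le, ← smul_eq_mul,
      ← sum_const, ← sum_add_distrib]
    exact sum_congr rfl fun i hi => Nat.sub_add_cancel (mem_filter.mp hi).2
  have hb : ∑ i ∈ t, b i ≤ ∑ i, (b i - k) + #s * k :=
    calc ∑ i ∈ t, b i ≤ ∑ i ∈ t, (b i - k + k) := sum_le_sum fun i _ => le_tsub_add
      _ = ∑ i ∈ t, (b i - k) + #s * k := by rw [sum_add_distrib, sum_const, hts, smul_eq_mul]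
      _ ≤ ∑ i, (b i - k) + #s * k := by gcongr; exact subset_univ t
  omega

theorem eq_add_sum_mul_tsub (g : ℕ → ℝ) {n N : ℕ} (hn : n ≤ N) :
    g n = g 0 + n * (g 1 - g 0) +
      ∑ k ∈ range N, ((g (k + 2) - g (k + 1)) - (g (k + 1) - g k)) * ((n - (k + 1) : ℕ) : ℝ) := by
  induction n with
  | zero => simp
  | succ n ih =>
    have hstep : ∀ k, n + 1 - (k + 1) = n - (k + 1) + if k < n then 1 else 0 := by
      intro k; split_ifs <;> omega
    have hrange : (range N).filter (· < n) = range n := by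
      ext k; simp only [mem_filter, mem_range]; omega
    simp_rw [hstep, Nat.cast_add, Nat.cast_ite, Nat.cast_one, Nat.cast_zero, mul_add,
      sum_add_distrib, mul_ite, mul_one, mul_zero, ← sum_filter, hrange]
    rw [sum_range_sub (fun k => g (k + 1) - g k), zero_add]
    linear_combination ih (by omega)

theorem sum_comp_le_sum_comp_of_sum_tsub_le {ι : Type*} (s : Finset ι) {g : ℕ → ℝ}
    (hg : Monotone fun k => g (k + 1) - g k) {a b : ι → ℕ}
    (htail : ∀ k, ∑ i ∈ s, (a i - k) ≤ ∑ i ∈ s, (b i - k))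
    (hsum : ∑ i ∈ s, a i = ∑ i ∈ s, b i) :
    ∑ i ∈ s, g (a i) ≤ ∑ i ∈ s, g (b i) := by
  set N := ∑ i ∈ s, (a i + b i)
  have hexpand : ∀ c : ι → ℕ, (∀ i ∈ s, c i ≤ N) → ∑ i ∈ s, g (c i) =
      #s * g 0 + (∑ i ∈ s, c i : ℕ) * (g 1 - g 0) +
        ∑ k ∈ range N, ((g (k + 2) - g (k + 1)) - (g (k + 1) - g k)) *
          ((∑ i ∈ s, (c i - (k + 1)) : ℕ) : ℝ) := by
    intro c hc
    rw [sum_congr rfl fun i hi => eq_add_sum_mul_tsub g (hc i hi)]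
    simp only [sum_add_distrib, sum_const, nsmul_eq_mul, Nat.cast_sum, sum_mul, mul_sum]
    rw [sum_comm]
  have hle : ∀ i ∈ s, a i ≤ N ∧ b i ≤ N := fun i hi =>
    ⟨le_trans le_self_add (single_le_sum (fun j _ => zero_le (a j + b j)) hi),
     le_trans le_add_self (single_le_sum (fun j _ => zero_le (a j + b j)) hi)⟩
  rw [hexpand a fun i hi => (hle i hi).1, hexpand b fun i hi => (hle i hi).2, hsum]
  gcongr _ + ∑ k ∈ _, _ * ?_ with k
  · exact sub_nonneg.mpr (hg k.le_succ)
  · exact_mod_cast htail (k + 1)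

theorem prod_le_prod_of_sq_le_mul {ι : Type*} (s : Finset ι) {f : ℕ → ℝ}
    (hpos : ∀ n, 0 < f n) (hf : ∀ n, f (n + 1) ^ 2 ≤ f n * f (n + 2)) {a b : ι → ℕ}
    (htail : ∀ k, ∑ i ∈ s, (a i - k) ≤ ∑ i ∈ s, (b i - k))
    (hsum : ∑ i ∈ s, a i = ∑ i ∈ s, b i) :
    ∏ i ∈ s, f (a i) ≤ ∏ i ∈ s, f (b i) := by
  have hlog : Monotone fun k => log (f (k + 1)) - log (f k) := by
    refine monotone_nat_of_le_succ fun k => ?_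
    have h := Real.log_le_log (pow_pos (hpos _) 2) (hf k)
    rw [Real.log_pow, Real.log_mul (hpos _).ne' (hpos _).ne'] at h
    push_cast at h
    linarith
  have hexp : ∀ c : ι → ℕ, ∏ i ∈ s, f (c i) = exp (∑ i ∈ s, log (f (c i))) := fun c => by
    rw [exp_sum]; exact prod_congr rfl fun i _ => (exp_log (hpos _)).symm
  rw [hexp a, hexp b, exp_le_exp]
  exact sum_comp_le_sum_comp_of_sum_tsub_le s (g := fun n => log (f n)) hlog htail hsum

theorem cauchy2_pos (n : ℕ) : 0 < cauchy2 n :=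
  intervalIntegral.intervalIntegral_pos_of_pos_on
    (Continuous.intervalIntegrable (by fun_prop) 0 1)
    (fun x hx => prod_pos fun i _ => by have := hx.1; positivity) zero_lt_one

theorem cauchy2_quadratic_nonneg (n : ℕ) (t : ℝ) :
    0 ≤ cauchy2 n * (t * t) + -2 * cauchy2 (n + 1) * t + cauchy2 (n + 2) := by
  set p := fun k (x : ℝ) => ∏ i ∈ range k, (x + i)
  calc 0 ≤ ∫ x in (0:ℝ)..1, p n x * ((t - (x + n)) ^ 2 + (x + n)) :=
        intervalIntegral.integral_nonneg zero_le_one fun x hx => by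
          have := hx.1; exact mul_nonneg (prod_nonneg fun i _ => by positivity) (by positivity)
    _ = ∫ x in (0:ℝ)..1, (p n x * (t * t) + -2 * p (n + 1) x * t + p (n + 2) x) :=
        intervalIntegral.integral_congr fun x _ => by
          simp only [p, prod_range_succ]; push_cast; ring
    _ = cauchy2 n * (t * t) + -2 * cauchy2 (n + 1) * t + cauchy2 (n + 2) := by
        rw [intervalIntegral.integral_add, intervalIntegral.integral_add,
          intervalIntegral.integral_mul_const, intervalIntegral.integral_mul_const,
          intervalIntegral.integral_const_mul]
        · rfl
        all_goals exact Continuous.intervalIntegrable (by fun_prop) 0 1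

theorem cauchy2_sq_le_mul (n : ℕ) : cauchy2 (n + 1) ^ 2 ≤ cauchy2 n * cauchy2 (n + 2) := by
  have h := discrim_le_zero (cauchy2_quadratic_nonneg n)
  rw [discrim] at h
  linarith

theorem cauchy2_majorization_general (m : ℕ) (lam mu : Fin m → ℕ)
    (h : Majorizes mu lam) :
    ∏ i, cauchy2 (lam i) ≤ ∏ i, cauchy2 (mu i) :=
  prod_le_prod_of_sq_le_mul univ cauchy2_pos cauchy2_sq_le_mul h.sum_tsub_le h.2

theorem cauchy2_majorization (m : ℕ) (hm : 1 ≤ m) (lam mu : Fin m → ℕ)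
    (h : Majorizes mu lam) :
    ∏ i, cauchy2 (lam i) ≤ ∏ i, cauchy2 (mu i) :=
  cauchy2_majorization_general m lam mu h
end

section
/- For all positive integers n, m and every integer ℓ ≥ 0, the quantity G = c_{ℓ+n+2m}(c_ℓ)² − c_{ℓ+n+m} c_{ℓ+m} c_ℓ − c_{ℓ+n} c_{ℓ+2m} c_ℓ + c_{ℓ+n} (c_{ℓ+m})² is nonnegative. -/
open MeasureTheory Real Nat

/-!
Let `μ_l` be the measure `x(x+1)⋯(x+l-1) dx` on `(0,1]`, so that `c_{l+k} = ∫ (x+l)⋯(x+l+k-1) dμ_l`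
and `c_l = μ_l(1)`. With `A = c_l`, `C = c_{l+m}` and `K = A c_{l+2m} - C²`, expanding the products
gives `G = ∫ p (A² q t - A C q - K) dμ_l` for rising products `p, q, t` starting at `l`, `l+n`,
`l+n+m`. Likewise `K = ∫ g (A r - C) dμ_l` with rising products `g, r` starting at `l`, `l+m`.
Because `n, m ≥ 1` shift the starting points by at least one while the variable ranges over `[0,1]`,
every value of `g` is at most every value of `q` and of `r`, and every value of `r` at most every
value of `t`. Hence `0 ≤ A r - C` and `K ≤ A q(x) (A t(x) - C)` for each `x`, which makes the
integrand of `G` pointwise nonnegative.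
-/

open Set

section

variable {α : Type*} [MeasurableSpace α] {μ : Measure α} [IsFiniteMeasure μ]

theorem integral_le_measureReal_mul_of_ae_le {g : α → ℝ} {c : ℝ} (hg : Integrable g μ)
    (h : ∀ᵐ z ∂μ, g z ≤ c) : ∫ z, g z ∂μ ≤ μ.real univ * c := by
  rw [← smul_eq_mul, ← integral_const]
  exact integral_mono_ae hg (integrable_const c) h

theorem measureReal_mul_integral_mul_sub_sq_le {g r : α → ℝ} {a b : ℝ}
    (hg : Integrable g μ) (hgr : Integrable (fun y => g y * r y) μ)
    (hgr_le : ∀ᵐ y ∂μ, ∫ z, g z ∂μ ≤ μ.real univ * r y) (ha : 0 ≤ a)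
    (hga : ∀ᵐ y ∂μ, g y ≤ a) (hrb : ∀ᵐ y ∂μ, r y ≤ b) :
    μ.real univ * ∫ y, g y * r y ∂μ - (∫ y, g y ∂μ) ^ 2
      ≤ μ.real univ * (a * (μ.real univ * b - ∫ y, g y ∂μ)) := by
  set A := μ.real univ
  set C := ∫ y, g y ∂μ
  have hint : Integrable (fun y => g y * (A * r y - C)) μ :=
    ((hgr.const_mul A).sub (hg.const_mul C)).congr
      (ae_of_all _ fun y => by simp only [Pi.sub_apply]; ring)
  have hK : A * ∫ y, g y * r y ∂μ - C ^ 2 = ∫ y, g y * (A * r y - C) ∂μ := by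
    calc _ = ∫ y, (A * (g y * r y) - C * g y) ∂μ := by
          rw [integral_sub (hgr.const_mul A) (hg.const_mul C), integral_const_mul,
            integral_const_mul, sq]
      _ = _ := by congr 1; ext y; ring
  rw [hK]
  refine integral_le_measureReal_mul_of_ae_le hint ?_
  filter_upwards [hgr_le, hga, hrb] with y hCr hgy hry
  calc g y * (A * r y - C) ≤ a * (A * r y - C) := mul_le_mul_of_nonneg_right hgy (by linarith)
    _ ≤ a * (A * b - C) := by gcongr

theorem integral_G_nonneg {p q t g r : α → ℝ}
    (hp : Integrable p μ) (hpq : Integrable (fun x => p x * q x) μ)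
    (hpqt : Integrable (fun x => p x * q x * t x) μ) (hg : Integrable g μ)
    (hgr : Integrable (fun x => g x * r x) μ) (hp0 : 0 ≤ᵐ[μ] p) (hq0 : 0 ≤ᵐ[μ] q)
    (hg_le_q : ∀ᵐ x ∂μ, ∀ᵐ y ∂μ, g y ≤ q x) (hr_le_t : ∀ᵐ x ∂μ, ∀ᵐ y ∂μ, r y ≤ t x)
    (hg_le_r : ∀ᵐ y ∂μ, ∀ᵐ z ∂μ, g z ≤ r y) :
    0 ≤ (∫ x, p x * q x * t x ∂μ) * μ.real univ ^ 2
      - (∫ x, p x * q x ∂μ) * (∫ x, g x ∂μ) * μ.real univ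
      - (∫ x, p x ∂μ) * (∫ x, g x * r x ∂μ) * μ.real univ
      + (∫ x, p x ∂μ) * (∫ x, g x ∂μ) ^ 2 := by
  set A := μ.real univ
  set C := ∫ x, g x ∂μ
  set K := A * ∫ x, g x * r x ∂μ - C ^ 2
  have hCr : ∀ᵐ y ∂μ, C ≤ A * r y :=
    hg_le_r.mono fun _ hy => integral_le_measureReal_mul_of_ae_le hg hy
  have hK : ∀ᵐ x ∂μ, K ≤ A * (q x * (A * t x - C)) := by
    filter_upwards [hg_le_q, hr_le_t, hq0] with x hgx hrx hqx
    exact measureReal_mul_integral_mul_sub_sq_le hg hgr hCr hqx hgx hrx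
  calc (0 : ℝ) ≤ ∫ x, p x * (A ^ 2 * (q x * t x) - A * C * q x - K) ∂μ := by
        refine integral_nonneg_of_ae ?_
        filter_upwards [hp0, hK] with x hpx hKx
        exact mul_nonneg hpx (by linarith [show A * (q x * (A * t x - C)) =
          A ^ 2 * (q x * t x) - A * C * q x by ring])
    _ = ∫ x, (A ^ 2 * (p x * q x * t x) - A * C * (p x * q x) - K * p x) ∂μ := by
        congr 1; ext x; ring
    _ = _ := by
        have hpqt_pq : Integrable (fun x => A ^ 2 * (p x * q x * t x) - A * C * (p x * q x)) μ :=
          (hpqt.const_mul _).sub (hpq.const_mul _)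
        rw [integral_sub hpqt_pq (hp.const_mul _),
          integral_sub (hpqt.const_mul _) (hpq.const_mul _), integral_const_mul,
          integral_const_mul, integral_const_mul]
        ring

end

noncomputable def risingProd (a k : ℕ) (x : ℝ) : ℝ := ∏ i ∈ Finset.range k, (x + (a + i))

@[fun_prop]
theorem continuous_risingProd (a k : ℕ) : Continuous (risingProd a k) := by
  unfold risingProd; fun_prop

theorem risingProd_nonneg (a k : ℕ) {x : ℝ} (hx : 0 ≤ x) : 0 ≤ risingProd a k x :=
  Finset.prod_nonneg fun _ _ => by positivity

theorem risingProd_add (a j k : ℕ) (x : ℝ) :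
    risingProd a (j + k) x = risingProd a j x * risingProd (a + j) k x := by
  unfold risingProd
  rw [Finset.prod_range_add]
  congr 1
  refine Finset.prod_congr rfl fun i _ => ?_
  push_cast; ring

theorem risingProd_le_of_add_one_le {a b k : ℕ} {x y : ℝ} (hx : x ∈ Icc (0 : ℝ) 1)
    (hy : y ∈ Icc (0 : ℝ) 1) (hab : a + 1 ≤ b) : risingProd a k y ≤ risingProd b k x := by
  have hab' : (a : ℝ) + 1 ≤ b := by exact_mod_cast hab
  exact Finset.prod_le_prod (fun i _ => by linarith [hy.1]) fun i _ => by linarith [hx.1, hy.2]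

noncomputable def risingMeasure (l : ℕ) : Measure ℝ :=
  (volume.restrict (Ioc 0 1)).withDensity fun x => ENNReal.ofReal (risingProd 0 l x)

instance (l : ℕ) : IsFiniteMeasure (risingMeasure l) :=
  isFiniteMeasure_withDensity_ofReal
    ((continuous_risingProd 0 l).integrableOn_Icc.mono_set Ioc_subset_Icc_self).hasFiniteIntegral

theorem ae_mem_Icc_risingMeasure (l : ℕ) : ∀ᵐ x ∂risingMeasure l, x ∈ Icc (0 : ℝ) 1 :=
  (withDensity_absolutelyContinuous _ _).ae_le
    ((ae_restrict_mem measurableSet_Ioc).mono fun _ hx => Ioc_subset_Icc_self hx)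

theorem Continuous.integrable_risingMeasure {f : ℝ → ℝ} (hf : Continuous f) (l : ℕ) :
    Integrable f (risingMeasure l) := by
  obtain ⟨C, hC⟩ := isCompact_Icc.exists_bound_of_continuousOn hf.continuousOn
  exact .of_bound hf.aestronglyMeasurable C ((ae_mem_Icc_risingMeasure l).mono hC)

theorem integral_risingMeasure (l : ℕ) (f : ℝ → ℝ) :
    ∫ x, f x ∂risingMeasure l = ∫ x in (0 : ℝ)..1, risingProd 0 l x * f x := by
  rw [intervalIntegral.integral_of_le zero_le_one, risingMeasure,
    integral_withDensity_eq_integral_toReal_smul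
      (continuous_risingProd 0 l).measurable.ennreal_ofReal
      (ae_of_all _ fun _ => ENNReal.ofReal_lt_top)]
  refine setIntegral_congr_fun measurableSet_Ioc fun x hx => ?_
  rw [smul_eq_mul, ENNReal.toReal_ofReal (risingProd_nonneg 0 l hx.1.le)]

theorem cauchy2_add_eq_integral (l k : ℕ) :
    cauchy2 (l + k) = ∫ x, risingProd l k x ∂risingMeasure l := by
  rw [integral_risingMeasure, cauchy2]
  congr 1; ext x
  simpa [risingProd] using risingProd_add 0 l k x

theorem cauchy2_eq_measureReal (l : ℕ) : cauchy2 l = (risingMeasure l).real univ := by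
  simpa [risingProd] using cauchy2_add_eq_integral l 0

theorem ae_ae_risingProd_le (l : ℕ) {a b k : ℕ} (hab : a + 1 ≤ b) :
    ∀ᵐ x ∂risingMeasure l, ∀ᵐ y ∂risingMeasure l, risingProd a k y ≤ risingProd b k x := by
  filter_upwards [ae_mem_Icc_risingMeasure l] with x hx
  filter_upwards [ae_mem_Icc_risingMeasure l] with y hy
  exact risingProd_le_of_add_one_le hx hy hab

theorem cauchy2_G_nonneg (n m l : ℕ) (hn : 0 < n) (hm : 0 < m) :
    0 ≤ cauchy2 (l + n + 2 * m) * cauchy2 l ^ 2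
        - cauchy2 (l + n + m) * cauchy2 (l + m) * cauchy2 l
        - cauchy2 (l + n) * cauchy2 (l + 2 * m) * cauchy2 l
        + cauchy2 (l + n) * cauchy2 (l + m) ^ 2 := by
  rw [show l + n + 2 * m = l + (n + m + m) by ring, show l + n + m = l + (n + m) by ring,
    show l + 2 * m = l + (m + m) by ring]
  simp only [cauchy2_add_eq_integral, risingProd_add]
  rw [cauchy2_eq_measureReal]
  have hnonneg (a k : ℕ) : 0 ≤ᵐ[risingMeasure l] risingProd a k :=
    (ae_mem_Icc_risingMeasure l).mono fun _ hx => risingProd_nonneg a k hx.1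
  have hint {f : ℝ → ℝ} (hf : Continuous f) := hf.integrable_risingMeasure l
  exact integral_G_nonneg (hint (by fun_prop)) (hint (by fun_prop)) (hint (by fun_prop))
    (hint (by fun_prop)) (hint (by fun_prop)) (hnonneg _ _) (hnonneg _ _)
    (ae_ae_risingProd_le l (by omega)) (ae_ae_risingProd_le l (by omega))
    (ae_ae_risingProd_le l (by omega))
end

section
/- For all positive integers n, m and every integer ℓ ≥ 0, the quantity H = c_{ℓ+n+2m}(c_ℓ)² − 2 c_{ℓ+n+m} c_{ℓ+m} c_ℓ + c_{ℓ+n} (c_{ℓ+m})² is nonnegative. -/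
/-!
`H` is the binary quadratic form `c_{ℓ+n+2m} X² - 2 c_{ℓ+n+m} X Y + c_{ℓ+n} Y²` at
`(X, Y) = (c_ℓ, c_{ℓ+m})`, so it suffices that `c_{k+m}² ≤ c_k c_{k+2m}` for all `k, m`.
Write `x(x+1)⋯(x+k+m-1) = P(x) Q(x)` with `P(x) = x⋯(x+k-1)` and `Q(x) = (x+k)⋯(x+k+m-1)`.
Cauchy–Schwarz for the weight `P ≥ 0` on `[0, 1]` gives `c_{k+m}² ≤ c_k ∫ P Q²`, and
`Q² ≤ Q · (x+k+m)⋯(x+k+2m-1)` bounds `∫ P Q²` by `c_{k+2m}`.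
-/

open MeasureTheory Real Nat

open Finset

section WeightedCauchySchwarz

variable {α : Type*} [MeasurableSpace α] {μ : Measure α} {w f : α → ℝ}

theorem sq_integral_mul_le_integral_mul_integral_mul_sq (hw : 0 ≤ᵐ[μ] w)
    (hw_int : Integrable w μ) (hwf : Integrable (fun x ↦ w x * f x) μ)
    (hwf2 : Integrable (fun x ↦ w x * f x ^ 2) μ) :
    (∫ x, w x * f x ∂μ) ^ 2 ≤ (∫ x, w x ∂μ) * ∫ x, w x * f x ^ 2 ∂μ := by
  have hquad : ∀ t : ℝ, 0 ≤ (∫ x, w x ∂μ) * (t * t) + (-2 * ∫ x, w x * f x ∂μ) * t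
      + ∫ x, w x * f x ^ 2 ∂μ := fun t ↦ by
    have hexpand : (fun x ↦ w x * (f x - t) ^ 2)
        = fun x ↦ t ^ 2 * w x - 2 * t * (w x * f x) + w x * f x ^ 2 := by
      ext x; ring
    calc 0 ≤ ∫ x, w x * (f x - t) ^ 2 ∂μ :=
          integral_nonneg_of_ae (hw.mono fun x hx ↦ mul_nonneg hx (sq_nonneg _))
      _ = _ := by
          rw [hexpand, integral_add (f := fun x ↦ t ^ 2 * w x - 2 * t * (w x * f x))
              ((hw_int.const_mul _).sub (hwf.const_mul _)) hwf2,
            integral_sub (f := fun x ↦ t ^ 2 * w x) (hw_int.const_mul _) (hwf.const_mul _),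
            integral_const_mul, integral_const_mul]
          ring
  have := discrim_le_zero hquad
  rw [discrim] at this
  linarith

end WeightedCauchySchwarz

theorem prod_range_mul_sq_prod_le {R : Type*} [CommSemiring R] [PartialOrder R]
    [IsOrderedRing R] {f : ℕ → R} (hf₀ : ∀ i, 0 ≤ f i) (hf : Monotone f) (k m : ℕ) :
    (∏ i ∈ range k, f i) * (∏ i ∈ range m, f (k + i)) ^ 2
      ≤ ∏ i ∈ range (k + 2 * m), f i := by
  rw [two_mul, ← add_assoc, prod_range_add, prod_range_add, sq, ← mul_assoc]
  gcongr with i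
  · exact mul_nonneg (prod_nonneg fun i _ ↦ hf₀ i) (prod_nonneg fun i _ ↦ hf₀ _)
  · exact fun i _ ↦ hf₀ _
  · exact hf (by omega)

theorem continuous_prod_range_add (s : Finset ℕ) (c : ℕ → ℝ) :
    Continuous fun x : ℝ ↦ ∏ i ∈ s, (x + c i) := by
  fun_prop

theorem cauchy2_add_sq_le (k m : ℕ) :
    cauchy2 (k + m) ^ 2 ≤ cauchy2 k * cauchy2 (k + 2 * m) := by
  set P : ℝ → ℝ := fun x ↦ ∏ i ∈ range k, (x + i)
  set Q : ℝ → ℝ := fun x ↦ ∏ i ∈ range m, (x + (k + i : ℕ))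
  have hP : Continuous P := continuous_prod_range_add _ _
  have hQ : Continuous Q := continuous_prod_range_add _ _
  have hPnn : ∀ x ∈ Set.Ioc (0 : ℝ) 1, 0 ≤ P x := fun x hx ↦
    prod_nonneg fun i _ ↦ add_nonneg hx.1.le i.cast_nonneg
  have hmid : cauchy2 (k + m) = ∫ x in (0 : ℝ)..1, P x * Q x := by
    simp only [cauchy2, prod_range_add, P, Q]
  have hupper : ∫ x in (0 : ℝ)..1, P x * Q x ^ 2 ≤ cauchy2 (k + 2 * m) :=
    intervalIntegral.integral_mono_on zero_le_one
      ((hP.mul (hQ.pow 2)).intervalIntegrable 0 1)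
      ((continuous_prod_range_add _ _).intervalIntegrable 0 1)
      fun x hx ↦ prod_range_mul_sq_prod_le (f := fun i : ℕ ↦ x + i)
        (fun i ↦ add_nonneg hx.1 i.cast_nonneg)
        (monotone_const.add Nat.mono_cast) k m
  have hcs := sq_integral_mul_le_integral_mul_integral_mul_sq
    (μ := volume.restrict (Set.Ioc 0 1))
    (ae_restrict_of_forall_mem measurableSet_Ioc hPnn) hP.integrableOn_Ioc
    ((hP.mul hQ).integrableOn_Ioc) ((hP.mul (hQ.pow 2)).integrableOn_Ioc)
  simp only [← intervalIntegral.integral_of_le zero_le_one] at hcs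
  rw [hmid]
  exact hcs.trans (mul_le_mul_of_nonneg_left hupper (cauchy2_pos k).le)

theorem quadratic_form_nonneg_of_sq_le_mul {K : Type*} [CommRing K] [LinearOrder K]
    [IsStrictOrderedRing K] {a b c : K} (ha : 0 < a) (hdisc : b ^ 2 ≤ a * c) (x y : K) :
    0 ≤ a * x ^ 2 - 2 * b * y * x + c * y ^ 2 := by
  have hsos : a * (a * x ^ 2 - 2 * b * y * x + c * y ^ 2)
      = (a * x - b * y) ^ 2 + (a * c - b ^ 2) * y ^ 2 := by
    ring
  refine nonneg_of_mul_nonneg_right ?_ ha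
  rw [hsos]
  exact add_nonneg (sq_nonneg _) (mul_nonneg (sub_nonneg.2 hdisc) (sq_nonneg y))

theorem cauchy2_H_nonneg_general (n m l : ℕ) :
    0 ≤ cauchy2 (l + n + 2 * m) * cauchy2 l ^ 2
        - 2 * cauchy2 (l + n + m) * cauchy2 (l + m) * cauchy2 l
        + cauchy2 (l + n) * cauchy2 (l + m) ^ 2 :=
  quadratic_form_nonneg_of_sq_le_mul (cauchy2_pos _)
    ((cauchy2_add_sq_le (l + n) m).trans_eq (mul_comm _ _)) _ _

theorem cauchy2_H_nonneg (n m l : ℕ) (hn : 0 < n) (hm : 0 < m) :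
    0 ≤ cauchy2 (l + n + 2 * m) * cauchy2 l ^ 2
        - 2 * cauchy2 (l + n + m) * cauchy2 (l + m) * cauchy2 l
        + cauchy2 (l + n) * cauchy2 (l + m) ^ 2 :=
  cauchy2_H_nonneg_general n m l
end

section
/- Let m ≥ 1 and let a_0, a_1, …, a_m be nonnegative integers. Then (c_{a_0}/a_0!)^{m−1} · c_{a_0+a_1+⋯+a_m}/(a_0+a_1+⋯+a_m)! ≥ ∏_{k=1}^m c_{a_0+a_k}/(a_0+a_k)!. -/
open MeasureTheory Real Nat

/-!
Write `f(n) = cₙ/n! = ∫₀¹ ρₙ` with `ρₙ(x) = x(x+1)⋯(x+n-1)/n!`, and `ρ_{A+k} = ρ_A · r_{A,k}`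
where `r_{t,k}(x) = ∏_{i<k} (x+t+i)/(t+1+i)`. Since `r_{A,b}` and `r_{A,c}` increase in `x`,
Chebyshev's integral inequality with weight `ρ_A` gives
`f(A+b) f(A+c) ≤ f(A) ∫₀¹ ρ_A r_{A,b} r_{A,c}`. For `x ≤ 1` each factor `(x+t+i)/(t+1+i)`
increases with `t`, so `r_{A,c} ≤ r_{A+b,c}` and the right side is at most `f(A) f(A+b+c)`.
This inequality gives the theorem by induction on `m`.
-/

open Finset

theorem integral_mul_integral_le_of_monovaryOn {α : Type*} [MeasurableSpace α] {μ : Measure α}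
    [SFinite μ] {s : Set α} {w g h : α → ℝ} (hs : MeasurableSet s) (hw : ∀ x ∈ s, 0 ≤ w x)
    (hgh : MonovaryOn g h s) (hw_int : IntegrableOn w s μ)
    (hwg_int : IntegrableOn (fun x ↦ w x * g x) s μ)
    (hwh_int : IntegrableOn (fun x ↦ w x * h x) s μ)
    (hwgh_int : IntegrableOn (fun x ↦ w x * (g x * h x)) s μ) :
    (∫ x in s, w x * g x ∂μ) * (∫ x in s, w x * h x ∂μ)
      ≤ (∫ x in s, w x ∂μ) * ∫ x in s, w x * (g x * h x) ∂μ := by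
  set ν := μ.restrict s
  have hnonneg :
      0 ≤ ∫ p, w p.1 * w p.2 * ((g p.2 - g p.1) * (h p.2 - h p.1)) ∂ν.prod ν := by
    rw [Measure.prod_restrict]
    exact setIntegral_nonneg (hs.prod hs) fun p hp ↦
      mul_nonneg (mul_nonneg (hw _ hp.1) (hw _ hp.2)) (hgh.sub_mul_sub_nonneg hp.1 hp.2)
  have hexpand : ∫ p, w p.1 * w p.2 * ((g p.2 - g p.1) * (h p.2 - h p.1)) ∂ν.prod ν
      = 2 * ((∫ x, w x ∂ν) * (∫ x, w x * (g x * h x) ∂ν)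
          - (∫ x, w x * g x ∂ν) * (∫ x, w x * h x ∂ν)) := by
    have hpoint : (fun p : α × α ↦ w p.1 * w p.2 * ((g p.2 - g p.1) * (h p.2 - h p.1)))
        = fun p ↦ (w p.1 * (w p.2 * (g p.2 * h p.2)) + w p.1 * (g p.1 * h p.1) * w p.2)
          - (w p.1 * g p.1 * (w p.2 * h p.2) + w p.1 * h p.1 * (w p.2 * g p.2)) := by
      ext p; ring
    rw [hpoint, integral_sub, integral_add, integral_add,
      integral_prod_mul w (fun x ↦ w x * (g x * h x)),
      integral_prod_mul (fun x ↦ w x * (g x * h x)) w,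
      integral_prod_mul (fun x ↦ w x * g x) (fun x ↦ w x * h x),
      integral_prod_mul (fun x ↦ w x * h x) (fun x ↦ w x * g x)]
    · ring
    · exact hwg_int.mul_prod hwh_int
    · exact hwh_int.mul_prod hwg_int
    · exact hw_int.mul_prod hwgh_int
    · exact hwgh_int.mul_prod hw_int
    · exact (hw_int.mul_prod hwgh_int).add (hwgh_int.mul_prod hw_int)
    · exact (hwg_int.mul_prod hwh_int).add (hwh_int.mul_prod hwg_int)
  linarith

theorem prod_le_pow_card_sub_one_mul {M ι R : Type*} [AddCommMonoid M] [CommSemiring R]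
    [PartialOrder R] [IsOrderedRing R] {f : M → R} (hf : ∀ x, 0 ≤ f x) (A : M)
    (hA : ∀ b c, f (A + b) * f (A + c) ≤ f A * f (A + b + c)) (a : ι → M) {s : Finset ι}
    (hs : s.Nonempty) :
    ∏ k ∈ s, f (A + a k) ≤ f A ^ (#s - 1) * f (A + ∑ k ∈ s, a k) := by
  induction hs using Finset.Nonempty.cons_induction with
  | singleton j => simp
  | cons j s hj hs ih =>
    calc ∏ k ∈ s.cons j hj, f (A + a k)
        = f (A + a j) * ∏ k ∈ s, f (A + a k) := prod_cons hj
      _ ≤ f (A + a j) * (f A ^ (#s - 1) * f (A + ∑ k ∈ s, a k)) :=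
        mul_le_mul_of_nonneg_left ih (hf _)
      _ = f A ^ (#s - 1) * (f (A + ∑ k ∈ s, a k) * f (A + a j)) := by ring
      _ ≤ f A ^ (#s - 1) * (f A * f (A + ∑ k ∈ s, a k + a j)) :=
        mul_le_mul_of_nonneg_left (hA _ _) (pow_nonneg (hf A) _)
      _ = f A ^ (#(s.cons j hj) - 1) * f (A + ∑ k ∈ s.cons j hj, a k) := by
        rw [card_cons, sum_cons, Nat.add_sub_cancel, ← pow_sub_one_mul hs.card_pos.ne',
          add_comm (a j), ← add_assoc]
        ring

theorem sum_range_add_one_eq_add_sum_Icc {M : Type*} [AddCommMonoid M] (a : ℕ → M) (m : ℕ) :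
    ∑ k ∈ range (m + 1), a k = a 0 + ∑ k ∈ Icc 1 m, a k := by
  rw [range_succ_eq_Icc_zero, ← insert_Icc_add_one_left_eq_Icc m.zero_le, sum_insert (by simp),
    zero_add]

noncomputable def pochhammerRatio (t : ℝ) (n : ℕ) (x : ℝ) : ℝ :=
  ∏ i ∈ range n, (x + t + i) / (t + 1 + i)

theorem pochhammerRatio_add (t : ℝ) (m n : ℕ) (x : ℝ) :
    pochhammerRatio t (m + n) x = pochhammerRatio t m x * pochhammerRatio (t + m) n x := by
  rw [pochhammerRatio, prod_range_add]
  congr 1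
  refine prod_congr rfl fun i _ ↦ ?_
  push_cast
  ring_nf

@[fun_prop]
theorem continuous_pochhammerRatio (t : ℝ) (n : ℕ) : Continuous (pochhammerRatio t n) := by
  unfold pochhammerRatio
  fun_prop

theorem pochhammerRatio_nonneg {t x : ℝ} (ht : 0 ≤ t) (hx : 0 ≤ x) (n : ℕ) :
    0 ≤ pochhammerRatio t n x :=
  prod_nonneg fun i _ ↦ by positivity

theorem monotoneOn_pochhammerRatio {t : ℝ} (ht : 0 ≤ t) (n : ℕ) :
    MonotoneOn (pochhammerRatio t n) (Set.Ici 0) := fun x hx y _ hxy ↦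
  prod_le_prod (fun i _ ↦ by have : (0 : ℝ) ≤ x := hx; positivity)
    fun i _ ↦ by gcongr

theorem pochhammerRatio_le_pochhammerRatio {t t' x : ℝ} (ht : 0 ≤ t) (htt' : t ≤ t')
    (hx₀ : 0 ≤ x) (hx₁ : x ≤ 1) (n : ℕ) :
    pochhammerRatio t n x ≤ pochhammerRatio t' n x := by
  have ht' : 0 ≤ t' := ht.trans htt'
  refine prod_le_prod (fun i _ ↦ by positivity) fun i _ ↦ ?_
  rw [div_le_div_iff₀ (by positivity) (by positivity)]
  nlinarith [mul_nonneg (sub_nonneg.2 htt') (sub_nonneg.2 hx₁)]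

theorem cauchy2_div_factorial (n : ℕ) :
    cauchy2 n / n ! = ∫ x in Set.Ioc (0 : ℝ) 1, pochhammerRatio 0 n x := by
  rw [cauchy2, intervalIntegral.integral_of_le zero_le_one, ← integral_div,
    ← prod_range_add_one_eq_factorial, Nat.cast_prod]
  refine setIntegral_congr_fun measurableSet_Ioc fun x _ ↦ ?_
  rw [pochhammerRatio, ← prod_div_distrib]
  push_cast
  ring_nf

theorem cauchy2_div_factorial_nonneg (n : ℕ) : 0 ≤ cauchy2 n / n ! := by
  rw [cauchy2_div_factorial]
  exact setIntegral_nonneg measurableSet_Ioc fun x hx ↦ pochhammerRatio_nonneg le_rfl hx.1.le n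

theorem cauchy2_div_factorial_mul_le (A b c : ℕ) :
    cauchy2 (A + b) / (A + b)! * (cauchy2 (A + c) / (A + c)!)
      ≤ cauchy2 A / A ! * (cauchy2 (A + b + c) / (A + b + c)!) := by
  set s := Set.Ioc (0 : ℝ) 1
  set w := pochhammerRatio 0 A
  set g := pochhammerRatio A b
  set h := pochhammerRatio A c
  set h' := pochhammerRatio (A + b) c
  have hsplit (k : ℕ) (x : ℝ) : pochhammerRatio 0 (A + k) x = w x * pochhammerRatio A k x := by
    simpa using pochhammerRatio_add 0 A k x
  have hint {f : ℝ → ℝ} (hf : Continuous f) : IntegrableOn f s := hf.integrableOn_Ioc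
  have hw {x : ℝ} (hx : x ∈ s) : 0 ≤ w x := pochhammerRatio_nonneg le_rfl hx.1.le A
  have hmono (n : ℕ) : MonotoneOn (pochhammerRatio A n) s :=
    (monotoneOn_pochhammerRatio A.cast_nonneg n).mono fun x hx ↦ hx.1.le
  simp only [cauchy2_div_factorial, hsplit, add_assoc A b c, pochhammerRatio_add (A : ℝ) b c]
  calc (∫ x in s, w x * g x) * (∫ x in s, w x * h x)
      ≤ (∫ x in s, w x) * ∫ x in s, w x * (g x * h x) :=
        integral_mul_integral_le_of_monovaryOn measurableSet_Ioc (fun x hx ↦ hw hx)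
          ((hmono b).monovaryOn (hmono c)) (hint (by fun_prop)) (hint (by fun_prop))
          (hint (by fun_prop)) (hint (by fun_prop))
    _ ≤ (∫ x in s, w x) * ∫ x in s, w x * (g x * h' x) := by
        refine mul_le_mul_of_nonneg_left (setIntegral_mono_on (hint (by fun_prop))
          (hint (by fun_prop)) measurableSet_Ioc fun x hx ↦ ?_)
          (setIntegral_nonneg measurableSet_Ioc fun x hx ↦ hw hx)
        gcongr
        · exact hw hx
        · exact pochhammerRatio_nonneg A.cast_nonneg hx.1.le b
        · exact pochhammerRatio_le_pochhammerRatio A.cast_nonneg (by simp) hx.1.le hx.2 c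

theorem cauchy2_product_lower_bound (m : ℕ) (hm : 1 ≤ m) (a : ℕ → ℕ) :
    ∏ k ∈ Finset.Icc 1 m, cauchy2 (a 0 + a k) / ((a 0 + a k)! : ℝ)
      ≤ (cauchy2 (a 0) / ((a 0)! : ℝ)) ^ (m - 1) *
        (cauchy2 (∑ k ∈ Finset.range (m + 1), a k)
          / ((∑ k ∈ Finset.range (m + 1), a k)! : ℝ)) := by
  have h := prod_le_pow_card_sub_one_mul (f := fun n ↦ cauchy2 n / n !)
    cauchy2_div_factorial_nonneg (a 0) (cauchy2_div_factorial_mul_le (a 0)) a (nonempty_Icc.2 hm)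
  rwa [Nat.card_Icc, Nat.add_sub_cancel, ← sum_range_add_one_eq_add_sum_Icc] at h
end

section
/- The generating function identity t/((1+t) ln(1+t)) = Σ_{n=0}^∞ (−1)^n c_n t^n/n! holds for all real t with |t| sufficiently small (in particular for |t| < 1, t ≠ 0, with value 1 at t = 0). -/
/-!
For `0 ≤ x ≤ 1` and `|t| < 1`, the binomial series gives
`(1 + t) ^ (-x) = ∑ (-1)^n x(x+1)⋯(x+n-1) t^n / n!`, with the `n`-th term bounded by `|t|^n`.
Integrating over `x ∈ [0, 1]` term by term (dominated convergence) yields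
`∑ (-1)^n c_n t^n / n! = ∫₀¹ (1 + t)^(-x) dx = t / ((1 + t) log (1 + t))`.
-/

open MeasureTheory Real Nat

theorem Ring.choose_neg_eq_prod_range {K : Type*} [Field K] [CharZero K] (x : K) (n : ℕ) :
    Ring.choose (-x) n = (-1) ^ n * (∏ i ∈ Finset.range n, (x + i)) / n ! := by
  have h := Ring.descPochhammer_eq_factorial_smul_choose (-x) n
  rw [nsmul_eq_mul, ← Polynomial.aeval_eq_smeval, Polynomial.aeval_def, ← Polynomial.eval_map,
    descPochhammer_map, descPochhammer_eval_eq_prod_range] at h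
  rw [eq_div_iff (Nat.cast_ne_zero.2 (factorial_ne_zero n)), mul_comm, ← h]
  calc ∏ j ∈ Finset.range n, (-x - j) = ∏ j ∈ Finset.range n, (-1 * (x + j)) :=
        Finset.prod_congr rfl fun j _ => by ring
    _ = _ := by rw [Finset.prod_mul_distrib, Finset.prod_const, Finset.card_range]

theorem hasSum_one_add_rpow_neg (x : ℝ) {t : ℝ} (ht : |t| < 1) :
    HasSum (fun n => (-1) ^ n * (∏ i ∈ Finset.range n, (x + i)) * t ^ n / n !)
      ((1 + t) ^ (-x)) := by
  have h := one_add_rpow_hasFPowerSeriesOnBall_zero (a := -x) |>.hasSum (y := t)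
    (by simpa [enorm_eq_nnnorm, ← NNReal.coe_lt_one] using ht)
  simp only [binomialSeries, FormalMultilinearSeries.ofScalars_apply_eq, zero_add,
    Ring.choose_neg_eq_prod_range, smul_eq_mul] at h
  simpa only [div_mul_eq_mul_div] using h

theorem prod_range_add_le_factorial {x : ℝ} (hx₀ : 0 ≤ x) (hx₁ : x ≤ 1) (n : ℕ) :
    ∏ i ∈ Finset.range n, (x + i) ≤ n ! := by
  rw [← Finset.prod_range_add_one_eq_factorial, Nat.cast_prod]
  gcongr with i
  push_cast
  linarith

theorem hasSum_cauchy2 {t : ℝ} (ht : |t| < 1) :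
    HasSum (fun n => (-1) ^ n * cauchy2 n * t ^ n / n !) (∫ x in (0:ℝ)..1, (1 + t) ^ (-x)) := by
  set F : ℕ → ℝ → ℝ := fun n x =>
    (-1) ^ n * (∏ i ∈ Finset.range n, (x + i)) * t ^ n / (n ! : ℝ)
  have hF_cont : ∀ n, Continuous (F n) := by fun_prop
  have hF_le : ∀ n, ∀ x ∈ Set.uIoc 0 1, ‖F n x‖ ≤ |t| ^ n := by
    intro n x hx
    rw [Set.uIoc_of_le zero_le_one] at hx
    have hP₀ : 0 ≤ ∏ i ∈ Finset.range n, (x + i) :=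
      Finset.prod_nonneg fun i _ => by linarith [hx.1, i.cast_nonneg (α := ℝ)]
    simp only [F, norm_div, norm_mul, norm_pow, norm_neg, norm_one, one_pow, one_mul,
      Real.norm_eq_abs, abs_of_nonneg hP₀, Nat.abs_cast]
    rw [div_le_iff₀ (by positivity), mul_comm]
    gcongr
    exact prod_range_add_le_factorial hx.1.le hx.2 n
  have h := intervalIntegral.hasSum_integral_of_dominated_convergence (μ := volume)
    (fun n _ => |t| ^ n)
    (fun n => (hF_cont n).aestronglyMeasurable) (fun n => ae_of_all _ (hF_le n))
    (ae_of_all _ fun _ _ => summable_geometric_of_lt_one (abs_nonneg t) ht)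
    intervalIntegrable_const (ae_of_all _ fun x _ => hasSum_one_add_rpow_neg x ht)
  simpa only [F, cauchy2, intervalIntegral.integral_div, intervalIntegral.integral_mul_const,
    intervalIntegral.integral_const_mul] using h

theorem integral_rpow_neg {b : ℝ} (hb : 0 < b) (hlog : log b ≠ 0) :
    ∫ x in (0:ℝ)..1, b ^ (-x) = (1 - b⁻¹) / log b := by
  have hderiv : ∀ x : ℝ, HasDerivAt (fun x => -b ^ (-x) / log b) (b ^ (-x)) x := fun x => by
    have := (hasStrictDerivAt_const_rpow hb (-x)).hasDerivAt.comp x (hasDerivAt_neg x)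
    refine (this.neg.div_const (log b)).congr_deriv ?_
    field_simp
  rw [intervalIntegral.integral_eq_sub_of_hasDerivAt (fun x _ => hderiv x)
    (((continuous_const_rpow hb.ne').comp continuous_neg).intervalIntegrable _ _)]
  simp only [rpow_neg_one, neg_zero, rpow_zero]
  ring

theorem cauchy2_generating_function (t : ℝ) (ht : |t| < 1) :
    HasSum (fun n : ℕ => (-1 : ℝ) ^ n * cauchy2 n * t ^ n / (n ! : ℝ))
      (if t = 0 then 1 else t / ((1 + t) * Real.log (1 + t))) := by
  convert hasSum_cauchy2 ht using 1
  split_ifs with ht₀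
  · simp [ht₀]
  have h₁ : 0 < 1 + t := by linarith [neg_abs_le t]
  have hlog : log (1 + t) ≠ 0 := by
    rw [Ne, log_eq_zero]
    grind
  rw [integral_rpow_neg h₁ hlog]
  field_simp
  ring
end
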